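/- arXiv:2006.05878 — 9 statements merged into one kernel-verified Lean document; each statement's English description precedes it below -/
import Mathlib

section
/- Any two strings in the set V^{i,(k)} = {1^k 0 u 1 0^k : the string 0u1 avoids both factors 0^k and 1^k} (strings of a fixed length i ≥ 2k+2 over {0,1}, with k ≥ 3) are non-overlapping: no proper nonempty prefix of one equals a proper nonempty suffix of the other. -/
/-!
A common nonempty proper prefix `p` of `u = 1^k 0 a 1 0^k` and suffix of `v = 1^k 0 b 1 0^k`
cannot have length `≤ k`, since it would consist of `1`s (prefix of `u`) and of `0`s (suffix
of `v`). If it is longer, `p` begins with `1^k`, so `1^k` occurs in `v` at a positive offset.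
Such an occurrence contains no `0`, so it lies strictly between the `0` after the leading block
and the first `0` of the trailing block, i.e. inside `0 b 1`, which is excluded.
-/

open List

/-- `w` avoids `p` as a consecutive factor. -/
def Avoids (p w : List Bool) : Prop := ¬ p <:+: w

/-- The set `V^{i,(k)}` of binary strings `1^k 0 u 1 0^k` of length `i`
where `0u1` avoids `0^k` and `1^k` as factors (`true` plays the role of `1`). -/
def Vik (k i : ℕ) : Set (List Bool) :=
  {w | ∃ u : List Bool,
      w = List.replicate k true ++ ([false] ++ u ++ [true]) ++ List.replicate k false ∧
      w.length = i ∧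
      Avoids (List.replicate k false) ([false] ++ u ++ [true]) ∧
      Avoids (List.replicate k true) ([false] ++ u ++ [true])}

/-- `u` and `v` are non-overlapping (in the direction prefix-of-`u` /
suffix-of-`v`): no proper nonempty prefix of `u` equals a proper nonempty
suffix of `v`. -/
def CrossBF (u v : List Bool) : Prop :=
  ∀ p : List Bool, p ≠ [] → p ≠ u → p ≠ v → ¬(p <+: u ∧ p <:+ v)

namespace List

variable {α : Type*} {a : α} {x l₁ l₂ : List α}

theorem eq_nil_of_prefix_cons_of_not_mem (h : x <+: a :: l₁) (ha : a ∉ x) : x = [] := by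
  cases x with
  | nil => rfl
  | cons b x => exact absurd ((cons_prefix_cons.mp h).1 ▸ mem_cons_self) ha

theorem infix_or_infix_of_infix_append_cons (ha : a ∉ x) (h : x <:+: l₁ ++ a :: l₂) :
    x <:+: l₁ ∨ x <:+: l₂ := by
  rcases infix_append_iff.mp h with h | h | ⟨y, z, rfl, hy, hz⟩
  · exact .inl h
  · rcases infix_cons_iff.mp h with h | h
    · exact .inl (eq_nil_of_prefix_cons_of_not_mem h ha ▸ nil_infix)
    · exact .inr h
  · obtain rfl : z = [] := eq_nil_of_prefix_cons_of_not_mem hz fun h => ha (mem_append_right y h)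
    exact .inl (by simpa using hy.isInfix)

end List

theorem not_replicate_infix_of_avoids {n : ℕ} {b : List Bool}
    (hb : Avoids (replicate (n + 1) true) ([false] ++ b ++ [true])) :
    ¬ replicate (n + 1) true <:+:
      replicate n true ++ ([false] ++ b ++ [true]) ++ replicate (n + 1) false := by
  have htrue : false ∉ replicate (n + 1) true := by simp
  have hsplit : replicate n true ++ ([false] ++ b ++ [true]) ++ replicate (n + 1) false =
      replicate n true ++ false :: ((b ++ [true]) ++ false :: replicate n false) := by
    simp [replicate_succ]
  intro h
  rw [hsplit] at h
  rcases infix_or_infix_of_infix_append_cons htrue h with h | h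
  · simpa using h.length_le
  rcases infix_or_infix_of_infix_append_cons htrue h with h | h
  · exact hb (infix_cons h)
  · simpa using h.length_le

theorem stmt_0_general (k i : ℕ) (hk : 3 ≤ k)
    (u v : List Bool) (hu : u ∈ Vik k i) (hv : v ∈ Vik k i) :
    CrossBF u v := by
  obtain ⟨n, rfl⟩ : ∃ n, k = n + 1 := ⟨k - 1, by omega⟩
  obtain ⟨a, rfl, -, -, -⟩ := hu
  obtain ⟨b, rfl, -, -, hb⟩ := hv
  rintro p hp - hpv ⟨hpre, hsuf⟩
  have hblock : replicate (n + 1) true <+: replicate (n + 1) true ++ ([false] ++ a ++ [true]) ++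
      replicate (n + 1) false := prefix_append_of_prefix (prefix_append _ _)
  rcases le_or_gt p.length (n + 1) with hlen | hlen
  · have hones : p <+: replicate (n + 1) true :=
      prefix_of_prefix_length_le hpre hblock (by simpa using hlen)
    have hzeros : p <:+ replicate (n + 1) false :=
      suffix_of_suffix_length_le hsuf (suffix_append _ _) (by simpa using hlen)
    obtain ⟨c, hc⟩ := exists_mem_of_ne_nil p hp
    have hc_true : c = true := eq_of_mem_replicate (hones.subset hc)
    have hc_false : c = false := eq_of_mem_replicate (hzeros.subset hc)
    exact absurd (hc_true.symm.trans hc_false) Bool.true_eq_false.mp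
  · have hones : replicate (n + 1) true <+: p :=
      prefix_of_prefix_length_le hblock hpre (by simpa using hlen.le)
    rw [replicate_succ, cons_append, cons_append] at hsuf hpv
    refine not_replicate_infix_of_avoids hb ?_
    exact hones.isInfix.trans ((suffix_cons_iff.mp hsuf).resolve_left hpv).isInfix

/-- Any two strings of `V^{i,(k)}` (`k ≥ 3`, `i ≥ 2k+2`) are non-overlapping. -/
theorem stmt_0 (k i : ℕ) (hk : 3 ≤ k) (hi : 2 * k + 2 ≤ i)
    (u v : List Bool) (hu : u ∈ Vik k i) (hv : v ∈ Vik k i) :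
    CrossBF u v :=
  stmt_0_general k i hk u v hu hv
end

section
/- For k ≥ 3 and n ≥ 2k+2, the set 𝒱_n^{(k)} = ⋃_{i=2k+2}^{n} V^{i,(k)} is a non-overlapping (cross-bifix-free) set of strings: for any two (possibly equal) elements u, v of 𝒱_n^{(k)}, no proper nonempty prefix of u equals a proper nonempty suffix of v. -/
/-!
A proper prefix `p` of a word of `𝒱` that is also a proper suffix of another one cannot be short:
if `|p| ≤ k`, it would be a prefix of `1^k` and a suffix of `0^k` at once. So `p` starts with
`1^k 0`. But in `v = 1^k 0β 0^k`, with `0β` avoiding `1^k`, the factor `1^k 0` occurs only at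
the very start: an occurrence starting inside the leading `1^k` would put a `1` where `v` has
its first `0`, and any later occurrence would place `1^k` inside `0β 0^k`, hence inside `0β`.
So `p` is all of `v`.
-/

open List

/-- `𝒱_n^{(k)}`, the union of the `V^{i,(k)}` for `2k+2 ≤ i ≤ n`. -/
def Vset (k n : ℕ) : Set (List Bool) :=
  {w | ∃ i : ℕ, 2 * k + 2 ≤ i ∧ i ≤ n ∧ w ∈ Vik k i}

namespace List

variable {α : Type*}

theorem eq_of_mem_of_prefix_replicate_append {a b : α} {k : ℕ} {p l : List α}
    (h : p <+: replicate k a ++ l) (hp : p.length ≤ k) (hb : b ∈ p) : b = a :=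
  eq_of_mem_replicate ((prefix_of_prefix_length_le h (prefix_append _ _) (by simpa)).subset hb)

theorem eq_of_mem_of_suffix_append_replicate {a b : α} {k : ℕ} {p l : List α}
    (h : p <:+ l ++ replicate k a) (hp : p.length ≤ k) (hb : b ∈ p) : b = a :=
  eq_of_mem_replicate ((suffix_of_suffix_length_le h (suffix_append _ _) (by simpa)).subset hb)

end List

theorem not_replicate_true_infix_append_replicate_false {k : ℕ} {β : List Bool}
    (hβ : Avoids (replicate k true) β) : ¬ replicate k true <:+: β ++ replicate k false := by
  intro h
  rcases infix_append_iff.mp h with hin | hin | ⟨l₁, l₂, hsplit, hl₁, hl₂⟩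
  · exact hβ hin
  · cases k with
    | zero => exact hβ nil_infix
    | succ k => simpa using hin.subset (mem_replicate.mpr ⟨k.succ_ne_zero, rfl⟩)
  · cases l₂ with
    | nil => exact hβ (by simpa [hsplit] using hl₁.isInfix)
    | cons b l₂ =>
      have hb_true : b = true := eq_of_mem_replicate (by rw [hsplit]; simp)
      have hb_false : b = false := eq_of_mem_replicate (hl₂.subset mem_cons_self)
      simp [hb_true] at hb_false

theorem eq_nil_of_append_eq_replicate_append {k : ℕ} {s t β : List Bool}
    (hβ : Avoids (replicate k true) (false :: β))
    (h : s ++ (replicate k true ++ false :: t) =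
      replicate k true ++ (false :: β ++ replicate k false)) :
    s = [] := by
  by_contra hs
  rcases append_eq_append_iff.mp h with ⟨a, hk, ha⟩ | ⟨a, -, ha⟩
  · have hlen : a.length + 1 ≤ k := by
      have hk_len := congrArg length hk
      have hs_len := length_pos_iff.mpr hs
      simp only [length_replicate, length_append] at hk_len
      omega
    have hpre : a ++ [false] <+: replicate k true ++ false :: t :=
      ⟨β ++ replicate k false, by simp [ha]⟩
    simpa using eq_of_mem_of_prefix_replicate_append hpre (by simpa using hlen)
      (mem_append_right a (mem_singleton_self false))
  · exact not_replicate_true_infix_append_replicate_false hβ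
      ⟨a, false :: t, by simp [ha]⟩

theorem exists_eq_of_mem_Vset {k n : ℕ} {v : List Bool} (hv : v ∈ Vset k n) :
    ∃ β, v = replicate k true ++ (false :: β ++ replicate k false) ∧
      Avoids (replicate k true) (false :: β) := by
  obtain ⟨-, -, -, b, rfl, -, -, hb⟩ := hv
  exact ⟨b ++ [true], by simp, by simpa using hb⟩

theorem stmt_1_general (k n : ℕ)
    (u v : List Bool) (hu : u ∈ Vset k n) (hv : v ∈ Vset k n) :
    CrossBF u v := by
  rintro p hp - hpv ⟨hpu, s, rfl⟩
  obtain ⟨γ, rfl, -⟩ := exists_eq_of_mem_Vset hu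
  obtain ⟨β, hv, hβ⟩ := exists_eq_of_mem_Vset hv
  rcases le_or_gt p.length k with hshort | hlong
  · obtain ⟨b, hb⟩ := exists_mem_of_ne_nil p hp
    have hb_true : b = true := eq_of_mem_of_prefix_replicate_append hpu hshort hb
    have hb_false : b = false := eq_of_mem_of_suffix_append_replicate
      (l := replicate k true ++ [false] ++ β) (by simpa [hv] using suffix_append s p) hshort hb
    simp [hb_true] at hb_false
  · obtain ⟨t, rfl⟩ : replicate k true ++ [false] <+: p :=
      prefix_of_prefix_length_le ⟨γ ++ replicate k false, by simp⟩ hpu (by simpa)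
    have hs : s = [] := eq_nil_of_append_eq_replicate_append hβ (by simpa using hv)
    exact hpv (by simp [hs])

/-- `𝒱_n^{(k)}` is a non-overlapping (cross-bifix-free) set of strings. -/
theorem stmt_1 (k n : ℕ) (hk : 3 ≤ k) (hn : 2 * k + 2 ≤ n)
    (u v : List Bool) (hu : u ∈ Vset k n) (hv : v ∈ Vset k n) :
    CrossBF u v :=
  stmt_1_general k n u v hu hv
end

section
/- For k ≥ 3 and n ≥ 2k+2, no string of 𝒱_n^{(k)} occurs as a factor (consecutive substring) of a different string of 𝒱_n^{(k)}; indeed no string of 𝒱_n^{(k)} is a proper factor of any string of 𝒱_n^{(k)}. -/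
open List

/-!
Write `v = 1^k m 0^k` with `m = 0 u 1` free of `1^k` and `0^k`. The only occurrence of `1^k`
in `v` is its prefix: any other one would have to cover the `0` that starts `m` or the first
`0` of the tail, or else lie inside `m`. Symmetrically the only occurrence of `0^k` is its
suffix. A string of the same shape occurring in `v` therefore starts at the start of `v` and
ends at its end, so it equals `v`.
-/

namespace List

variable {α : Type*} {b c : α} {k : ℕ}

/-- An occurrence of `b^k` at offset `s.length` avoids the position `l.length`, which holds `c`. -/
theorem length_add_le_or_lt_of_append_replicate_prefix (hbc : b ≠ c) {s l l' : List α}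
    (h : s ++ replicate k b <+: l ++ c :: l') :
    s.length + k ≤ l.length ∨ l.length < s.length := by
  by_contra! hcover
  have hi : l.length < (s ++ replicate k b).length := by simp; omega
  have := h.getElem hi
  rw [getElem_append_right hcover.2, getElem_replicate] at this
  simp [hbc] at this

theorem eq_nil_of_append_replicate_prefix (hbc : b ≠ c) {m s : List α}
    (hm : m.head? = some c) (hav : ¬ replicate k b <:+: m)
    (h : s ++ replicate k b <+: replicate k b ++ m ++ replicate k c) : s = [] := by
  obtain ⟨k, rfl⟩ : ∃ k', k = k' + 1 :=
    Nat.exists_eq_add_one.mpr (Nat.pos_of_ne_zero (by rintro rfl; exact hav nil_infix))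
  obtain ⟨m, rfl⟩ : ∃ m', m = c :: m' := by
    cases m <;> simp_all
  -- The block at offset `s.length > 0` misses both the `c` at position `k` and the one at
  -- `k + m.length`, so it lies inside `m`.
  have hlen := h.length_le
  have hfirst := length_add_le_or_lt_of_append_replicate_prefix hbc
    (l := replicate (k + 1) b) (l' := m ++ replicate (k + 1) c)
    (by simpa only [append_assoc, cons_append] using h)
  have hlast := length_add_le_or_lt_of_append_replicate_prefix hbc
    (l := replicate (k + 1) b ++ c :: m) (l' := replicate k c) h
  simp only [length_append, length_replicate, length_cons] at hlen hfirst hlast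
  by_contra hs
  have hs_pos := length_pos_iff.mpr hs
  have hpre : s ++ replicate (k + 1) b <+: replicate (k + 1) b ++ c :: m :=
    prefix_of_prefix_length_le h (prefix_append _ _) (by simp; omega)
  obtain ⟨s, rfl⟩ : replicate (k + 1) b <+: s :=
    prefix_of_prefix_length_le (prefix_append _ _) ((prefix_append _ _).trans hpre) (by simp; omega)
  rw [append_assoc, prefix_append_right_inj] at hpre
  exact hav ((suffix_append s _).isInfix.trans hpre.isInfix)

theorem eq_nil_of_replicate_append_suffix (hbc : b ≠ c) {m t : List α}
    (hm : m.getLast? = some c) (hav : ¬ replicate k b <:+: m)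
    (h : replicate k b ++ t <:+ replicate k c ++ m ++ replicate k b) : t = [] := by
  simpa using eq_nil_of_append_replicate_prefix hbc (k := k) (m := m.reverse) (s := t.reverse)
    (by simpa using hm) (by rwa [← reverse_replicate, reverse_infix]) (by simpa using h.reverse)

end List

theorem stmt_2_general (k n : ℕ)
    (u v : List Bool) (hu : u ∈ Vset k n) (hv : v ∈ Vset k n)
    (hfac : u <:+: v) : u = v := by
  obtain ⟨_, _, _, mu, rfl, _, _, _⟩ := hu
  obtain ⟨_, _, _, mv, rfl, _, hv₀, hv₁⟩ := hv
  obtain ⟨s, t, hst⟩ := hfac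
  have hs : s = [] := eq_nil_of_append_replicate_prefix (b := true) (c := false) (by decide)
    (by simp) hv₁ ⟨[false] ++ mu ++ [true] ++ replicate k false ++ t, by rw [← hst]; simp⟩
  have ht : t = [] := eq_nil_of_replicate_append_suffix (b := false) (c := true) (by decide)
    (getLast?_concat ..) hv₀
    ⟨s ++ replicate k true ++ ([false] ++ mu ++ [true]), by rw [← hst]; simp⟩
  rw [hs, ht, nil_append, append_nil] at hst
  exact hst

/-- No string of `𝒱_n^{(k)}` is a proper factor of a string of `𝒱_n^{(k)}`. -/
theorem stmt_2 (k n : ℕ) (hk : 3 ≤ k) (hn : 2 * k + 2 ≤ n)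
    (u v : List Bool) (hu : u ∈ Vset k n) (hv : v ∈ Vset k n)
    (hfac : u <:+: v) : u = v :=
  stmt_2_general k n u v hu hv hfac
end

section
/- Every string in V^{i,(k)} is self non-overlapping (bifix-free): no proper nonempty prefix of it equals one of its proper nonempty suffixes. -/
open List

/-!
If `p` is a proper nonempty prefix and suffix of `w = aⁿ z bⁿ` with `|p| ≤ n`, then `p`
consists of `a`'s (as a prefix) and of `b`'s (as a suffix). If `|p| > n`, then `p` starts
with `aⁿ`, so `w` has an occurrence of `aⁿ` at a positive position; but such an occurrence
would either cover the first letter `b` of `z`, or lie inside `z`, or reach into the final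
block `bⁿ`.
-/

namespace List

variable {α : Type*}

theorem getElem?_append_replicate_append {d r : List α} {a : α} {n i : ℕ}
    (h₁ : d.length ≤ i) (h₂ : i < d.length + n) : (d ++ replicate n a ++ r)[i]? = some a := by
  grind

theorem eq_nil_of_append_replicate_append_eq {a b : α} (hab : a ≠ b) {n : ℕ} {z d r : List α}
    (hz : z.head? = some b) (hav : ¬ replicate n a <:+: z)
    (h : d ++ replicate n a ++ r = replicate n a ++ z ++ replicate n b) : d = [] := by
  have hn : n ≠ 0 := by rintro rfl; exact hav nil_infix
  have hlen := congrArg length h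
  simp only [length_append, length_replicate] at hlen
  have hz₀ : z[0]? = some b := by rwa [head?_eq_getElem?] at hz
  have hz_pos : 0 < z.length := by cases z <;> simp_all
  by_contra hd_ne
  have hd : 0 < d.length := length_pos_iff.mpr hd_ne
  by_cases hdn : d.length ≤ n
  · have hn' := congrArg (·[n]?) h
    rw [getElem?_append_replicate_append hdn (by omega), getElem?_append_left (by simp; omega),
      getElem?_append_right (by simp), length_replicate, Nat.sub_self, hz₀] at hn'
    exact hab (Option.some.inj hn')
  by_cases hdz : d.length ≤ z.length
  · have htake := congrArg (take (d.length + n)) h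
    rw [take_left' (by simp), append_assoc, take_append, take_of_length_le (by simp),
      length_replicate, take_append_of_le_length (by omega), Nat.add_sub_cancel] at htake
    have hsuf : replicate n a <:+ take d.length z :=
      suffix_of_suffix_length_le (htake ▸ suffix_append d _) (suffix_append _ _)
        (by simp; omega)
    exact hav (hsuf.isInfix.trans (take_prefix _ _).isInfix)
  · have hlast := congrArg (·[d.length + n - 1]?) h
    rw [getElem?_append_replicate_append (by omega) (by omega),
      getElem?_append_right (by simp; omega), getElem?_replicate, length_append,
      length_replicate, if_pos (by omega)] at hlast
    exact hab (Option.some.inj hlast)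

theorem not_prefix_and_suffix_replicate_append_append {a b : α} (hab : a ≠ b) {n : ℕ}
    {z p : List α} (hz : z.head? = some b) (hav : ¬ replicate n a <:+: z) (hp : p ≠ [])
    (hpw : p ≠ replicate n a ++ z ++ replicate n b) :
    ¬ (p <+: replicate n a ++ z ++ replicate n b ∧
      p <:+ replicate n a ++ z ++ replicate n b) := by
  rintro ⟨hpre, hsuf⟩
  have hpre_a : replicate n a <+: replicate n a ++ z ++ replicate n b :=
    (prefix_append _ _).trans (prefix_append _ _)
  by_cases hpn : p.length ≤ n
  · have hpa : p <+: replicate n a := prefix_of_prefix_length_le hpre hpre_a (by simpa)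
    have hpb : p <:+ replicate n b :=
      suffix_of_suffix_length_le hsuf (suffix_append _ _) (by simpa)
    obtain ⟨x, hx⟩ := exists_mem_of_ne_nil p hp
    exact hab ((eq_of_mem_replicate (hpa.subset hx)).symm.trans
      (eq_of_mem_replicate (hpb.subset hx)))
  · obtain ⟨r, rfl⟩ := prefix_of_prefix_length_le hpre_a hpre (by simp; omega)
    obtain ⟨d, hd⟩ := hsuf
    rw [← append_assoc] at hd
    obtain rfl := eq_nil_of_append_replicate_append_eq hab hz hav hd
    exact hpw hd

end List

theorem stmt_3_general (k i : ℕ)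
    (w : List Bool) (hw : w ∈ Vik k i) : CrossBF w w := by
  obtain ⟨u, rfl, -, -, hav⟩ := hw
  intro p hp hpw _
  exact not_prefix_and_suffix_replicate_append_append (by decide) (by simp) hav hp hpw

/-- Every string of `V^{i,(k)}` is bifix-free (self non-overlapping). -/
theorem stmt_3 (k i : ℕ) (hk : 3 ≤ k) (hi : 2 * k + 2 ≤ i)
    (w : List Bool) (hw : w ∈ Vik k i) : CrossBF w w :=
  stmt_3_general k i w hw
end

section
/- Let r_ℓ^{(k)} be the number of binary strings of length ℓ that start with 0, end with 1, and avoid both 0^k and 1^k as factors (with r_0^{(k)} = 1). Then for ℓ ≥ 1, r_ℓ^{(k)} = (f_{ℓ-1}^{(k-1)} + d_ℓ^{(k)})/2, where f^{(k)} is the k-generalized Fibonacci sequence defined by f_ℓ^{(k)} = 2^ℓ for 0 ≤ ℓ ≤ k−1 and f_ℓ^{(k)} = Σ_{i=1}^{k} f_{ℓ−i}^{(k)} for ℓ ≥ k, and d_ℓ^{(k)} = 1 if ℓ ≡ 0 (mod k), −1 if ℓ ≡ 1 (mod k), and 0 otherwise. -/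
open List

/-- `R_ℓ(0^k,1^k)`: binary strings of length `ℓ` starting with `0`, ending with
`1`, avoiding `0^k` and `1^k` as factors. -/
def Rset (k ℓ : ℕ) : Set (List Bool) :=
  {w | w.length = ℓ ∧ w.head? = some false ∧ w.getLast? = some true ∧
       Avoids (List.replicate k false) w ∧ Avoids (List.replicate k true) w}

/-!
Write `r_ℓ` and `t_ℓ` for the numbers of words with first letter `0`, resp. `1`, last letter `1`
and all runs shorter than `k`. Peeling off the first run `c^a` (`0 < a < min k ℓ`) leaves a word
of the same kind starting with the other letter, unless the word is a single run, so
`r_ℓ = ∑ t_{ℓ-a}` and `t_ℓ = [ℓ < k] + ∑ r_{ℓ-a}`. Hence `r + t` satisfies the recurrence of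
`f_{ℓ-1}`, and `r - t` that of `d_ℓ`, which telescopes since `d_ℓ = [k ∣ ℓ] - [k ∣ ℓ - 1]`.
Strong induction identifies both, and `2 r_ℓ = (r_ℓ + t_ℓ) + (r_ℓ - t_ℓ)`.
-/

lemma exists_eq_replicate_append {α : Type*} {c : α} {w : List α}
    (hw : w.head? = some c) : ∃ a v, 0 < a ∧ w = replicate a c ++ v ∧ v.head? ≠ some c := by
  induction w with
  | nil => simp at hw
  | cons x u ih =>
    obtain rfl : x = c := by simpa using hw
    by_cases hu : u.head? = some x
    · obtain ⟨a, v, -, rfl, hv⟩ := ih hu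
      exact ⟨a + 1, v, a.succ_pos, rfl, hv⟩
    · exact ⟨1, u, one_pos, rfl, hu⟩

lemma takeWhile_replicate_append {α : Type*} [DecidableEq α] {c : α} {v : List α}
    (hv : v.head? ≠ some c) (a : ℕ) :
    (replicate a c ++ v).takeWhile (· == c) = replicate a c := by
  rw [takeWhile_append_of_pos (by simp)]
  cases v with
  | nil => simp
  | cons x v => simp_all

lemma eq_of_replicate_append_eq {α : Type*} [DecidableEq α] {c : α} {a b : ℕ} {v w : List α}
    (hv : v.head? ≠ some c) (hw : w.head? ≠ some c)
    (h : replicate a c ++ v = replicate b c ++ w) : a = b := by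
  simpa [takeWhile_replicate_append hv, takeWhile_replicate_append hw] using
    congrArg (fun u => (u.takeWhile (· == c)).length) h

lemma replicate_append_ne_replicate_append {α : Type*} {k b : ℕ} {x c d : α} {t v : List α}
    (hb : 0 < b) (hbk : b < k) (hcd : c ≠ d) (hv : v.head? = some d) :
    replicate k x ++ t ≠ replicate b c ++ v := by
  intro h
  rw [← Nat.add_sub_cancel' hbk.le, replicate_add, append_assoc] at h
  obtain ⟨hxc, rfl⟩ := append_inj h (by simp)
  obtain rfl : x = c := (replicate_right_inj hb.ne').1 hxc
  exact hcd (by simpa [head?_replicate, Nat.sub_ne_zero_of_lt hbk] using hv)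

-- An occurrence starting inside the block `c^a` would read `c` there and `!c` at the start of `v`.
lemma Avoids.replicate_append {k a : ℕ} {x c : Bool} {v : List Bool} (hak : a < k)
    (hv : v.head? = some (!c)) (h : Avoids (replicate k x) v) :
    Avoids (replicate k x) (replicate a c ++ v) := by
  rintro ⟨s, t, hst⟩
  rw [append_assoc, append_eq_append_iff] at hst
  rcases hst with ⟨r, hr, hrt⟩ | ⟨r, -, rfl⟩
  · have hrep : r = replicate r.length c :=
      eq_replicate_iff.2 ⟨rfl, fun y hy => eq_of_mem_replicate (hr ▸ mem_append_right s hy)⟩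
    have hra : r.length ≤ a := by
      have h := congrArg length hr
      rw [length_replicate, length_append] at h
      omega
    rcases Nat.eq_zero_or_pos r.length with h0 | hpos
    · rw [length_eq_zero_iff.1 h0, nil_append] at hrt
      exact h ⟨[], t, by rw [nil_append, hrt]⟩
    · rw [hrep] at hrt
      exact replicate_append_ne_replicate_append hpos (by omega) (by simp) hv hrt
  · exact h (infix_append' r _ t)

def shortRunWords (k ℓ : ℕ) (c e : Bool) : Set (List Bool) :=
  {w | w.length = ℓ ∧ w.head? = some c ∧ w.getLast? = some e ∧
       Avoids (replicate k false) w ∧ Avoids (replicate k true) w}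

namespace shortRunWords

variable {k ℓ : ℕ} {c e : Bool}

lemma finite : (shortRunWords k ℓ c e).Finite :=
  (List.finite_length_eq Bool ℓ).subset fun _ hw => hw.1

lemma avoids (b : Bool) {w : List Bool} (hw : w ∈ shortRunWords k ℓ c e) :
    Avoids (replicate k b) w := by
  cases b
  exacts [hw.2.2.2.1, hw.2.2.2.2]

lemma replicate_mem (hℓ : 0 < ℓ) (hℓk : ℓ < k) : replicate ℓ c ∈ shortRunWords k ℓ c c := by
  refine ⟨length_replicate, by simp [head?_replicate, hℓ.ne'],
    by simp [getLast?_replicate, hℓ.ne'], ?_, ?_⟩ <;>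
  · intro h
    simpa using (h.length_le.trans_lt (by simpa using hℓk)).ne rfl

lemma replicate_append_mem {a : ℕ} {v : List Bool} (ha : 0 < a) (hak : a < k)
    (hv : v ∈ shortRunWords k ℓ (!c) e) : replicate a c ++ v ∈ shortRunWords k (a + ℓ) c e := by
  obtain ⟨hlen, hhead, hlast, -, -⟩ := id hv
  have hne : v ≠ [] := by rintro rfl; simp at hhead
  exact ⟨by simp [hlen], by simp [head?_append, head?_replicate, ha.ne'],
    by rw [getLast?_append_of_ne_nil _ hne, hlast],
    (avoids false hv).replicate_append hak hhead, (avoids true hv).replicate_append hak hhead⟩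

lemma mem_cases {w : List Bool} (hw : w ∈ shortRunWords k ℓ c e) :
    (c = e ∧ 0 < ℓ ∧ ℓ < k ∧ w = replicate ℓ c) ∨
      ∃ a ∈ Finset.Ico 1 (min k ℓ), ∃ v ∈ shortRunWords k (ℓ - a) (!c) e,
        w = replicate a c ++ v := by
  obtain ⟨hlen, hhead, hlast, -, -⟩ := id hw
  obtain ⟨a, v, ha, rfl, hv⟩ := exists_eq_replicate_append hhead
  have hak : a < k := by
    by_contra! hka
    have hpre : replicate k c <+: replicate a c := prefix_replicate_iff.2 (by simpa using hka)
    exact avoids c hw (hpre.trans (prefix_append _ _)).isInfix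
  rw [length_append, length_replicate] at hlen
  rcases eq_or_ne v [] with rfl | hne
  · left
    simp only [append_nil, getLast?_replicate, ha.ne', if_false, Option.some.injEq] at hlast
    rw [length_nil, add_zero] at hlen
    exact ⟨hlast, by omega, by omega, by rw [← hlen]; simp⟩
  · right
    have hvhead : v.head? = some (!c) := by
      obtain ⟨y, v, rfl⟩ := exists_cons_of_ne_nil hne
      cases y <;> cases c <;> simp_all
    have hvlen := length_pos_iff.2 hne
    refine ⟨a, Finset.mem_Ico.2 ⟨ha, lt_min hak (by omega)⟩, v,
      ⟨by omega, hvhead, ?_, fun h => avoids false hw ?_, fun h => avoids true hw ?_⟩, rfl⟩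
    · rwa [getLast?_append_of_ne_nil _ hne] at hlast
    all_goals exact h.trans (infix_append_right)

lemma eq_union (k ℓ : ℕ) (c e : Bool) :
    shortRunWords k ℓ c e =
      (if c = e ∧ 0 < ℓ ∧ ℓ < k then {replicate ℓ c} else ∅) ∪
        ⋃ a ∈ Finset.Ico 1 (min k ℓ),
          (replicate a c ++ ·) '' shortRunWords k (ℓ - a) (!c) e := by
  ext w
  simp only [Set.mem_union, Set.mem_iUnion, Set.mem_image, exists_prop]
  constructor
  · intro hw
    rcases mem_cases hw with ⟨hce, hℓ, hℓk, rfl⟩ | ⟨a, ha, v, hv, rfl⟩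
    · left; simp [hce, hℓ, hℓk]
    · right; exact ⟨a, ha, v, hv, rfl⟩
  · rintro (hw | ⟨a, ha, v, hv, rfl⟩)
    · split_ifs at hw with h
      · obtain ⟨rfl, hℓ, hℓk⟩ := h
        rw [Set.mem_singleton_iff.1 hw]
        exact replicate_mem hℓ hℓk
      · exact absurd hw (Set.notMem_empty w)
    · rw [Finset.mem_Ico, lt_min_iff] at ha
      simpa [Nat.add_sub_cancel' ha.2.2.le] using
        replicate_append_mem (ℓ := ℓ - a) ha.1 ha.2.1 hv

lemma ncard_eq (k ℓ : ℕ) (c e : Bool) :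
    (shortRunWords k ℓ c e).ncard =
      (if c = e ∧ 0 < ℓ ∧ ℓ < k then 1 else 0) +
        ∑ a ∈ Finset.Ico 1 (min k ℓ), (shortRunWords k (ℓ - a) (!c) e).ncard := by
  have hrun : ∀ a (v : List Bool), v ∈ shortRunWords k (ℓ - a) (!c) e →
      v.head? ≠ some c ∧ (!c) ∈ replicate a c ++ v := fun a v hv =>
    ⟨by simp [hv.2.1], mem_append_right _ (mem_of_mem_head? hv.2.1)⟩
  have hdisj : (↑(Finset.Ico 1 (min k ℓ)) : Set ℕ).PairwiseDisjoint
      fun a => (replicate a c ++ ·) '' shortRunWords k (ℓ - a) (!c) e := by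
    intro a _ b _ hab
    refine Set.disjoint_left.2 ?_
    rintro _ ⟨v, hv, rfl⟩ ⟨w, hw, hwv⟩
    exact hab (eq_of_replicate_append_eq (hrun a v hv).1 (hrun b w hw).1 hwv.symm)
  have hsingle : Disjoint (if c = e ∧ 0 < ℓ ∧ ℓ < k then {replicate ℓ c} else ∅)
      (⋃ a ∈ Finset.Ico 1 (min k ℓ),
        (replicate a c ++ ·) '' shortRunWords k (ℓ - a) (!c) e) := by
    split_ifs
    · simp only [Set.disjoint_singleton_left, Set.mem_iUnion, Set.mem_image, not_exists,
        not_and]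
      intro a _ v hv hvc
      exact Bool.not_ne_self c (eq_of_mem_replicate (hvc ▸ (hrun a v hv).2))
    · exact Set.empty_disjoint _
  have hfin : ∀ a ∈ (↑(Finset.Ico 1 (min k ℓ)) : Set ℕ),
      ((replicate a c ++ ·) '' shortRunWords k (ℓ - a) (!c) e).Finite :=
    fun a _ => finite.image _
  rw [eq_union, Set.ncard_union_eq hsingle (by split_ifs <;> simp)
      ((Finset.finite_toSet _).biUnion hfin), ← Finset.set_biUnion_coe,
    (Finset.finite_toSet _).ncard_biUnion hfin hdisj, finsum_mem_coe_finset]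
  congr 1
  · split_ifs <;> simp
  · exact Finset.sum_congr rfl fun a _ =>
      Set.ncard_image_of_injective _ (append_right_injective _)

lemma ncard_add_ncard_eq (hℓ : 0 < ℓ) :
    ((shortRunWords k ℓ false true).ncard + (shortRunWords k ℓ true true).ncard : ℤ) =
      (if ℓ < k then 1 else 0) + 1 * ∑ a ∈ Finset.Ico 1 (min k ℓ),
        ((shortRunWords k (ℓ - a) false true).ncard +
          (shortRunWords k (ℓ - a) true true).ncard : ℤ) := by
  rw [ncard_eq k ℓ false, ncard_eq k ℓ true]
  push_cast
  simp only [Bool.not_false, Bool.not_true, true_and, false_and, hℓ,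
    if_false, Finset.sum_add_distrib]
  ring

lemma ncard_sub_ncard_eq (hℓ : 0 < ℓ) :
    ((shortRunWords k ℓ false true).ncard - (shortRunWords k ℓ true true).ncard : ℤ) =
      -(if ℓ < k then 1 else 0) + -1 * ∑ a ∈ Finset.Ico 1 (min k ℓ),
        ((shortRunWords k (ℓ - a) false true).ncard -
          (shortRunWords k (ℓ - a) true true).ncard : ℤ) := by
  rw [ncard_eq k ℓ false, ncard_eq k ℓ true]
  push_cast
  simp only [Bool.not_false, Bool.not_true, true_and, false_and, hℓ,
    if_false, Finset.sum_sub_distrib]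
  ring

end shortRunWords

lemma eq_of_forall_eq_add_mul_sum {k : ℕ} {u v g : ℕ → ℤ} {ε : ℤ}
    (hu : ∀ ℓ, 0 < ℓ → u ℓ = g ℓ + ε * ∑ a ∈ Finset.Ico 1 (min k ℓ), u (ℓ - a))
    (hv : ∀ ℓ, 0 < ℓ → v ℓ = g ℓ + ε * ∑ a ∈ Finset.Ico 1 (min k ℓ), v (ℓ - a)) :
    ∀ ℓ, 0 < ℓ → u ℓ = v ℓ := by
  intro ℓ
  induction ℓ using Nat.strong_induction_on with
  | _ ℓ ih =>
    intro hℓ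
    rw [hu ℓ hℓ, hv ℓ hℓ]
    congr 2
    refine Finset.sum_congr rfl fun a ha => ?_
    rw [Finset.mem_Ico, lt_min_iff] at ha
    exact ih _ (by omega) (by omega)

lemma eq_add_sum_of_fibonacci {k : ℕ} {f : ℕ → ℕ} (hf1 : ∀ j, j < k - 1 → f j = 2 ^ j)
    (hf2 : ∀ j, k - 1 ≤ j → f j = ∑ i ∈ Finset.range (k - 1), f (j - 1 - i))
    {ℓ : ℕ} (hℓ : 0 < ℓ) :
    f (ℓ - 1) = (if ℓ < k then 1 else 0) + ∑ a ∈ Finset.Ico 1 (min k ℓ), f (ℓ - a - 1) := by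
  rw [Finset.sum_Ico_eq_sum_range]
  rcases lt_or_ge ℓ k with hℓk | hkℓ
  · rw [if_pos hℓk, min_eq_right hℓk.le, hf1 _ (by omega), ← Finset.sum_range_reflect]
    calc 2 ^ (ℓ - 1) = 1 + ∑ i ∈ Finset.range (ℓ - 1), 2 ^ i := by
          rw [Nat.geomSum_eq le_rfl]
          have := Nat.one_le_two_pow (n := ℓ - 1)
          omega
      _ = _ := by
          congr 1
          refine Finset.sum_congr rfl fun i hi => ?_
          rw [Finset.mem_range] at hi
          rw [hf1 _ (by omega)]
          congr 1
          omega
  · rw [if_neg (by omega), min_eq_left hkℓ, zero_add, hf2 _ (by omega)]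
    exact Finset.sum_congr rfl fun i _ => by congr 1; omega

def fibCorrection (k n : ℕ) : ℤ := if n % k = 0 then 1 else if n % k = 1 then -1 else 0

section fibCorrection

variable {k : ℕ}

lemma fibCorrection_eq_sub (hk : 2 ≤ k) {n : ℕ} (hn : 0 < n) :
    fibCorrection k n = (if k ∣ n then 1 else 0) - (if k ∣ n - 1 then 1 else 0) := by
  have h1 : k ∣ n - 1 ↔ n % k = 1 := by
    rw [← Nat.modEq_iff_dvd' hn, Nat.ModEq, Nat.mod_eq_of_lt hk, eq_comm]
  simp only [fibCorrection, Nat.dvd_iff_mod_eq_zero, h1]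
  split_ifs <;> omega

lemma sum_range_fibCorrection (hk : 2 ≤ k) {ℓ m : ℕ} (hm : m ≤ ℓ) :
    ∑ a ∈ Finset.range m, fibCorrection k (ℓ - a) =
      (if k ∣ ℓ then 1 else 0) - (if k ∣ ℓ - m then 1 else 0) := by
  have h := Finset.sum_range_sub' (fun a => if k ∣ ℓ - a then (1 : ℤ) else 0) m
  rw [Nat.sub_zero] at h
  rw [← h]
  refine Finset.sum_congr rfl fun a ha => ?_
  rw [Finset.mem_range] at ha
  rw [fibCorrection_eq_sub hk (by omega), Nat.sub_sub]

lemma fibCorrection_eq (hk : 2 ≤ k) {ℓ : ℕ} (hℓ : 0 < ℓ) :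
    fibCorrection k ℓ = -(if ℓ < k then 1 else 0) +
      -1 * ∑ a ∈ Finset.Ico 1 (min k ℓ), fibCorrection k (ℓ - a) := by
  have h := sum_range_fibCorrection hk (min_le_right k ℓ)
  rw [Finset.range_eq_Ico, Finset.sum_eq_sum_Ico_succ_bot (by omega), zero_add,
    Nat.sub_zero] at h
  rcases lt_or_ge ℓ k with hℓk | hkℓ
  · rw [min_eq_right hℓk.le, Nat.sub_self, if_neg (Nat.not_dvd_of_pos_of_lt hℓ hℓk),
      if_pos (dvd_zero k)] at h
    rw [if_pos hℓk, min_eq_right hℓk.le]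
    linarith
  · simp only [min_eq_left hkℓ, Nat.dvd_sub_iff_left hkℓ dvd_rfl, sub_self] at h
    rw [if_neg (by omega), min_eq_left hkℓ]
    linarith

end fibCorrection

/-- For `ℓ ≥ 1`, `r_ℓ^{(k)} = (f_{ℓ-1}^{(k-1)} + d_ℓ^{(k)}) / 2`, where `f^{(k-1)}`
is the `(k-1)`-generalized Fibonacci sequence. -/
theorem stmt_5 (k ℓ : ℕ) (hk : 2 ≤ k) (hℓ : 1 ≤ ℓ)
    (f : ℕ → ℕ)
    (hf1 : ∀ j : ℕ, j < k - 1 → f j = 2 ^ j)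
    (hf2 : ∀ j : ℕ, k - 1 ≤ j → f j = ∑ i ∈ Finset.range (k - 1), f (j - 1 - i)) :
    (2 : ℤ) * (Rset k ℓ).ncard =
      (f (ℓ - 1) : ℤ) +
        (if ℓ % k = 0 then 1 else if ℓ % k = 1 then -1 else 0) := by
  let r n : ℤ := (shortRunWords k n false true).ncard
  let t n : ℤ := (shortRunWords k n true true).ncard
  have hsum : r ℓ + t ℓ = f (ℓ - 1) :=
    eq_of_forall_eq_add_mul_sum (u := fun n => r n + t n) (v := fun n => (f (n - 1) : ℤ))
      (fun n hn => shortRunWords.ncard_add_ncard_eq hn)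
      (fun n hn => by rw [one_mul]; exact_mod_cast eq_add_sum_of_fibonacci hf1 hf2 hn) ℓ hℓ
  have hdiff : r ℓ - t ℓ = fibCorrection k ℓ :=
    eq_of_forall_eq_add_mul_sum (u := fun n => r n - t n)
      (fun n hn => shortRunWords.ncard_sub_ncard_eq hn) (fun n hn => fibCorrection_eq hk hn) ℓ hℓ
  change 2 * r ℓ = _ + fibCorrection k ℓ
  linarith
end

section
/- Any two matrices in 𝒱_{m,n}^{(k)} with different numbers of columns, or whose column positions are shifted, cannot overlap horizontally or diagonally: more precisely, if C has rows from V^{s,(k)} and D has rows from V^{t,(k)}, any placement of D over C in which some row of D is aligned so that a proper nonempty prefix of a row of D coincides with a proper nonempty suffix of a row of C (or vice versa) yields a mismatch in some entry. -/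
open List

/-- A variable-dimension binary matrix is modeled as a list of rows.  `entryZ M i j` is
the entry of `M` in row `i`, column `j` (as integers), when it exists. -/
def entryZ (M : List (List Bool)) (i j : ℤ) : Option Bool :=
  if 0 ≤ i ∧ 0 ≤ j then (M[i.toNat]?).bind (fun r => r[j.toNat]?) else none

/-- The translate of `B` by `(a, b)` agrees with `A` on all common entries. -/
def AgreeAt (A B : List (List Bool)) (a b : ℤ) : Prop :=
  ∀ i j : ℤ, ∀ x y : Bool,
    entryZ A i j = some x → entryZ B (i - a) (j - b) = some y → x = y

/-- The supports of `A` and of the translate of `B` by `(a, b)` intersect. -/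
def MeetsAt (A B : List (List Bool)) (a b : ℤ) : Prop :=
  ∃ i j : ℤ, ∃ x y : Bool,
    entryZ A i j = some x ∧ entryZ B (i - a) (j - b) = some y

/-- `A` and `B` overlap: some translate of `B` over `A` (not the trivial
coincidence of a matrix with itself) has nonempty intersection with `A` and
agrees with `A` on all common entries. -/
def MOverlap (A B : List (List Bool)) : Prop :=
  ∃ a b : ℤ, ¬(a = 0 ∧ b = 0 ∧ A = B) ∧ MeetsAt A B a b ∧ AgreeAt A B a b

/-- The matrices `M_{h,s}^{(k)}` with `h` rows taken from `V^{s,(k)}`, first row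
`T`, last row `B`, and inner rows different from `T` and `B`. -/
def MatSet (k h s : ℕ) (T B : List Bool) : Set (List (List Bool)) :=
  {M | M.length = h ∧ M.head? = some T ∧ M.getLast? = some B ∧
       (∀ r ∈ M, r ∈ Vik k s) ∧
       (∀ i : ℕ, ∀ r : List Bool, 0 < i → i + 1 < h → M[i]? = some r →
          r ≠ T ∧ r ≠ B)}

/-! Every row of `V^{t,(k)}` begins with `1^k`, while in a row of `V^{s,(k)}` every window of
length `k` starting at a position `p ≥ 1` (clipped to the row) contains a `0`: windows starting
in `1^k` reach the `0` that follows it, windows inside `0u1` contain a `0` because `0u1` avoids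
`1^k`, and windows reaching past `0u1` meet the suffix `0^k`. So if a row of `D` is placed at
horizontal offset `b > 0` over a row of `C`, its leading `1^k` lies over such a window and the
two rows disagree; a negative offset is the same situation with `C` and `D` exchanged. -/

theorem List.exists_getElem?_eq_false_of_not_infix {w : List Bool} {p k : ℕ}
    (hpk : p + k ≤ w.length) (h : ¬ replicate k true <:+: w) :
    ∃ q < k, w[p + q]? = some false := by
  by_contra! hall
  have hwindow : (w.drop p).take k = replicate k true := by
    refine ext_getElem? fun q => ?_
    rw [getElem?_take, getElem?_drop, getElem?_replicate]
    split_ifs with hq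
    · have hx := getElem?_eq_getElem (show p + q < w.length by omega)
      cases hwq : w[p + q]
      · exact absurd (hwq ▸ hx) (hall q hq)
      · exact hwq ▸ hx
    · rfl
  exact h (hwindow ▸ (take_prefix k _).isInfix.trans (drop_suffix p w).isInfix)

section Vik

variable {k i : ℕ} {w : List Bool}

theorem length_of_mem_Vik (hw : w ∈ Vik k i) : w.length = i := hw.choose_spec.2.1

theorem getElem?_eq_true_of_mem_Vik (hw : w ∈ Vik k i) {j : ℕ} (hj : j < k) :
    w[j]? = some true := by
  obtain ⟨u, rfl, -⟩ := hw
  rw [append_assoc, getElem?_append_left (by simpa using hj), getElem?_replicate, if_pos hj]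

theorem exists_getElem?_eq_false_of_mem_Vik (hw : w ∈ Vik k i) {p : ℕ} (hp : 0 < p)
    (hpi : p < i) : ∃ q < k, w[p + q]? = some false := by
  obtain ⟨u, rfl, rfl, -, hav⟩ := hw
  set m := [false] ++ u ++ [true]
  have hmid : ∀ j < m.length, (replicate k true ++ m ++ replicate k false)[k + j]? = m[j]? := by
    intro j hj
    rw [append_assoc, getElem?_append_right (by simp), length_replicate,
      Nat.add_sub_cancel_left, getElem?_append_left hj]
  have hlen : 0 < m.length := by simp [m]
  simp only [length_append, length_replicate] at hpi
  by_cases hpk : p ≤ k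
  · refine ⟨k - p, by omega, ?_⟩
    rw [show p + (k - p) = k + 0 by omega, hmid 0 hlen]
    rfl
  by_cases hin : p + k ≤ k + m.length
  · obtain ⟨q, hq, hfalse⟩ :=
      exists_getElem?_eq_false_of_not_infix (p := p - k) (by omega) hav
    refine ⟨q, hq, ?_⟩
    rw [show p + q = k + (p - k + q) by omega, hmid _ (by omega), hfalse]
  refine ⟨k + m.length - p, by omega, ?_⟩
  rw [getElem?_append_right (by simp; omega), getElem?_replicate, if_pos (by simp; omega)]

end Vik

theorem entryZ_natCast (M : List (List Bool)) (i j : ℕ) :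
    entryZ M i j = M[i]?.bind (·[j]?) := by
  simp [entryZ]

theorem exists_of_entryZ_eq_some {M : List (List Bool)} {i j : ℤ} {x : Bool}
    (h : entryZ M i j = some x) :
    ∃ (i₀ j₀ : ℕ) (r : List Bool), i = i₀ ∧ j = j₀ ∧ M[i₀]? = some r ∧ r[j₀]? = some x := by
  unfold entryZ at h
  split_ifs at h with hij
  obtain ⟨r, hr, hx⟩ := Option.bind_eq_some_iff.1 h
  exact ⟨i.toNat, j.toNat, r, by omega, by omega, hr, hx⟩

theorem MeetsAt.symm {A B : List (List Bool)} {a b : ℤ} (h : MeetsAt A B a b) :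
    MeetsAt B A (-a) (-b) := by
  obtain ⟨i, j, x, y, hx, hy⟩ := h
  exact ⟨i - a, j - b, y, x, hy, by simpa using hx⟩

theorem AgreeAt.symm {A B : List (List Bool)} {a b : ℤ} (h : AgreeAt A B a b) :
    AgreeAt B A (-a) (-b) := by
  intro i j x y hx hy
  rw [sub_neg_eq_add, sub_neg_eq_add] at hy
  exact (h (i + a) (j + b) y x hy (by simpa using hx)).symm

theorem not_agreeAt_of_pos {k s t : ℕ} {C D : List (List Bool)}
    (hC : ∀ r ∈ C, r ∈ Vik k s) (hD : ∀ r ∈ D, r ∈ Vik k t) {a b : ℤ} (hb : 0 < b)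
    (hmeet : MeetsAt C D a b) : ¬ AgreeAt C D a b := by
  intro hagree
  obtain ⟨i, j, x, y, hx, hy⟩ := hmeet
  obtain ⟨i₀, j₀, r, rfl, rfl, hr, hrj⟩ := exists_of_entryZ_eq_some hx
  obtain ⟨i₁, j₁, r', hi₁, hj₁, hr', -⟩ := exists_of_entryZ_eq_some hy
  have hrV := hC r (mem_of_getElem? hr)
  lift b to ℕ using hb.le
  have hbs : b < s := by
    have := (List.getElem?_eq_some_iff.1 hrj).1
    rw [length_of_mem_Vik hrV] at this
    omega
  obtain ⟨q, hq, hfalse⟩ := exists_getElem?_eq_false_of_mem_Vik hrV (by omega) hbs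
  have htrue := getElem?_eq_true_of_mem_Vik (hD r' (mem_of_getElem? hr')) hq
  have hC' : entryZ C i₀ ↑(b + q) = some false := by
    rw [entryZ_natCast, hr]
    exact hfalse
  have hD' : entryZ D (i₀ - a) (↑(b + q) - b) = some true := by
    rw [hi₁, show ((b + q : ℕ) : ℤ) - b = (q : ℕ) by push_cast; ring, entryZ_natCast, hr']
    exact htrue
  exact Bool.false_ne_true (hagree _ _ _ _ hC' hD')

theorem stmt_6_general (k s t : ℕ)
    (C D : List (List Bool))
    (hC : ∀ r ∈ C, r ∈ Vik k s) (hD : ∀ r ∈ D, r ∈ Vik k t)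
    (a b : ℤ) (hb : b ≠ 0) (hmeet : MeetsAt C D a b) :
    ¬ AgreeAt C D a b := by
  rcases hb.lt_or_gt with hb | hb
  · exact fun h => not_agreeAt_of_pos hD hC (neg_pos.2 hb) hmeet.symm h.symm
  · exact not_agreeAt_of_pos hC hD hb hmeet

/-- Matrices with rows from `V^{s,(k)}` resp. `V^{t,(k)}` cannot overlap
horizontally or diagonally: any placement with nonzero horizontal shift whose
supports intersect yields a mismatch in some entry. -/
theorem stmt_6 (k s t : ℕ) (hk : 3 ≤ k) (hs : 2 * k + 2 ≤ s) (ht : 2 * k + 2 ≤ t)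
    (C D : List (List Bool))
    (hC : ∀ r ∈ C, r ∈ Vik k s) (hD : ∀ r ∈ D, r ∈ Vik k t)
    (a b : ℤ) (hb : b ≠ 0) (hmeet : MeetsAt C D a b) :
    ¬ AgreeAt C D a b :=
  stmt_6_general k s t C D hC hD a b hb hmeet
end

section
/- The cardinality of 𝒱_{m,n}^{(k)} equals Σ_{h=2}^{m} Σ_{s=3}^{n−2k} (r_s^{(k)} − 2)^{h−2}, where r_s^{(k)} is the number of binary strings of length s starting with 0, ending with 1, and avoiding both 0^k and 1^k as factors. -/
open List

/-!
A matrix of `M_{h,s}^{(k)}` is `T :: (L ++ [B])` for a list `L` of `h - 2` rows taken freely from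
`V^{s,(k)} \ {T, B}`, and stripping the border `1^k … 0^k` is a bijection from `V^{s,(k)}` onto
`R_{s-2k}^{(k)}`; so `|M_{h,s}^{(k)}| = (r_{s-2k}^{(k)} - 2)^(h-2)`. The pieces `M_{h,s}^{(k)}` are
disjoint because `h` and `s` are the number of rows and the length of a row.
-/

def listsOfLengthIn {α : Type*} (s : Set α) (n : ℕ) : Set (List α) :=
  {l | l.length = n ∧ ∀ x ∈ l, x ∈ s}

section ListsOfLengthIn

variable {α : Type*} (s : Set α)

theorem listsOfLengthIn_zero : listsOfLengthIn s 0 = {[]} := by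
  ext l
  simp only [listsOfLengthIn, List.length_eq_zero_iff, Set.mem_ofPred_eq, Set.mem_singleton_iff,
    and_iff_left_iff_imp]
  rintro rfl
  simp

theorem listsOfLengthIn_succ (n : ℕ) :
    listsOfLengthIn s (n + 1) =
      (fun p : α × List α => p.1 :: p.2) '' (s ×ˢ listsOfLengthIn s n) := by
  ext l
  constructor
  · rintro ⟨hl, hmem⟩
    cases l with
    | nil => simp at hl
    | cons a u =>
      exact ⟨(a, u), ⟨hmem a (by simp), by simpa using hl, fun x hx => hmem x (by simp [hx])⟩, rfl⟩
  · rintro ⟨⟨a, u⟩, ⟨ha, hu, hmem⟩, rfl⟩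
    exact ⟨by simp [hu], by simpa using ⟨ha, hmem⟩⟩

theorem ncard_listsOfLengthIn (n : ℕ) : (listsOfLengthIn s n).ncard = s.ncard ^ n := by
  induction n with
  | zero => simp [listsOfLengthIn_zero]
  | succ n ih =>
    have hcons : Function.Injective (fun p : α × List α => p.1 :: p.2) :=
      fun _ _ h => Prod.ext (List.cons.inj h).1 (List.cons.inj h).2
    rw [listsOfLengthIn_succ, Set.ncard_image_of_injective _ hcons, Set.ncard_prod, ih, pow_succ,
      mul_comm]

variable {s}

theorem Set.Finite.listsOfLengthIn (hs : s.Finite) (n : ℕ) : (listsOfLengthIn s n).Finite := by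
  induction n with
  | zero => simp [listsOfLengthIn_zero]
  | succ n ih =>
    rw [listsOfLengthIn_succ]
    exact (hs.prod ih).image _

end ListsOfLengthIn

theorem List.exists_eq_cons_append_singleton {α : Type*} {l : List α} {a b : α}
    (ha : l.head? = some a) (hb : l.getLast? = some b) (hl : l ≠ [a]) :
    ∃ u, l = a :: (u ++ [b]) := by
  cases l with
  | nil => simp at ha
  | cons x t =>
    obtain rfl : x = a := by simpa using ha
    cases t using List.reverseRecOn with
    | nil => exact absurd rfl hl
    | append_singleton u c =>
      rw [← List.cons_append, List.getLast?_concat, Option.some_inj] at hb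
      subst hb
      exact ⟨u, rfl⟩

theorem Finset.sum_Icc_add_comp_sub {M : Type*} [AddCommMonoid M] (f : ℕ → M) {a : ℕ}
    (ha : 0 < a) (c n : ℕ) :
    ∑ s ∈ Finset.Icc (c + a) n, f (s - c) = ∑ ℓ ∈ Finset.Icc a (n - c), f ℓ := by
  refine Finset.sum_nbij' (· - c) (· + c) ?_ ?_ ?_ ?_ fun _ _ => rfl <;>
    intro x hx <;> simp only [Finset.mem_Icc] at hx ⊢ <;> omega

theorem List.forall_inner_getElem?_cons_append_singleton_iff {α : Type*} (a b : α)
    (L : List α) (P : α → Prop) :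
    (∀ i r, 0 < i → i + 1 < L.length + 2 → (a :: (L ++ [b]))[i]? = some r → P r) ↔
      ∀ r ∈ L, P r := by
  constructor
  · intro H r hr
    obtain ⟨j, hj, rfl⟩ := List.getElem_of_mem hr
    exact H (j + 1) _ (by omega) (by omega) (by simp [List.getElem?_append_left hj])
  · rintro H (_ | j) r hi hj hr
    · omega
    · rw [List.getElem?_cons_succ, List.getElem?_append_left (by omega)] at hr
      exact H r (List.mem_of_getElem? hr)

section Counting

variable {k s : ℕ}

theorem length_of_mem_vik {w : List Bool} (hw : w ∈ Vik k s) : w.length = s :=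
  hw.choose_spec.2.1

theorem finite_vik (k s : ℕ) : (Vik k s).Finite :=
  (List.finite_length_eq Bool s).subset fun _ => length_of_mem_vik

theorem vik_eq_image (hs : 2 * k ≤ s) :
    Vik k s = (fun r => List.replicate k true ++ r ++ List.replicate k false) ''
      Rset k (s - 2 * k) := by
  ext w
  constructor
  · rintro ⟨u, rfl, hlen, hav0, hav1⟩
    refine ⟨[false] ++ u ++ [true], ⟨?_, rfl, ?_, hav0, hav1⟩, rfl⟩
    · simp only [List.length_append, List.length_replicate] at hlen ⊢
      omega
    · rw [List.getLast?_concat]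
  · rintro ⟨r, ⟨hlen, hhead, hlast, hav0, hav1⟩, rfl⟩
    obtain ⟨u, rfl⟩ :=
      List.exists_eq_cons_append_singleton hhead hlast (by rintro rfl; simp at hlast)
    refine ⟨u, rfl, ?_, hav0, hav1⟩
    simp only [List.length_append, List.length_replicate, List.length_cons] at hlen ⊢
    omega

theorem ncard_vik (hs : 2 * k ≤ s) : (Vik k s).ncard = (Rset k (s - 2 * k)).ncard := by
  rw [vik_eq_image hs, Set.ncard_image_of_injective _ fun a b h => by simpa using h]

theorem matSet_subset_listsOfLengthIn (h : ℕ) (T B : List Bool) :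
    MatSet k h s T B ⊆ listsOfLengthIn (Vik k s) h :=
  fun _ hM => ⟨hM.1, hM.2.2.2.1⟩

theorem cons_append_mem_matSet_iff {h : ℕ} {T B : List Bool} {L : List (List Bool)}
    (hT : T ∈ Vik k s) (hB : B ∈ Vik k s) :
    T :: (L ++ [B]) ∈ MatSet k h s T B ↔
      L ∈ listsOfLengthIn (Vik k s \ {T, B}) (h - 2) ∧ 2 ≤ h := by
  have hlast : (T :: (L ++ [B])).getLast? = some B := by
    rw [← List.cons_append, List.getLast?_concat]
  have hrows : (∀ r ∈ T :: (L ++ [B]), r ∈ Vik k s) ↔ ∀ r ∈ L, r ∈ Vik k s := by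
    simp [or_imp, forall_and, hT, hB]
  have hinner := List.forall_inner_getElem?_cons_append_singleton_iff T B L (· ∉ ({T, B} : Set _))
  simp only [Set.mem_insert_iff, Set.mem_singleton_iff, not_or] at hinner
  constructor
  · rintro ⟨hlen, -, -, hV, hTB⟩
    obtain rfl : L.length + 2 = h := by simpa using hlen
    exact ⟨⟨by omega, fun r hr => ⟨hrows.1 hV r hr, by simpa using hinner.1 hTB r hr⟩⟩, by omega⟩
  · rintro ⟨⟨hlen, hL⟩, hh⟩
    obtain rfl : h = L.length + 2 := by omega
    exact ⟨by simp, rfl, hlast, hrows.2 fun r hr => (hL r hr).1,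
      hinner.2 fun r hr => by simpa [not_or] using (hL r hr).2⟩

theorem matSet_eq_image {h : ℕ} (hh : 2 ≤ h) {T B : List Bool} (hT : T ∈ Vik k s)
    (hB : B ∈ Vik k s) :
    MatSet k h s T B =
      (fun L => T :: (L ++ [B])) '' listsOfLengthIn (Vik k s \ {T, B}) (h - 2) := by
  ext M
  constructor
  · intro hM
    obtain ⟨L, rfl⟩ := List.exists_eq_cons_append_singleton hM.2.1 hM.2.2.1
      (by rintro rfl; have := hM.1; simp at this; omega)
    exact ⟨L, ((cons_append_mem_matSet_iff hT hB).1 hM).1, rfl⟩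
  · rintro ⟨L, hL, rfl⟩
    exact (cons_append_mem_matSet_iff hT hB).2 ⟨hL, hh⟩

theorem ncard_matSet {h : ℕ} (hh : 2 ≤ h) {T B : List Bool} (hT : T ∈ Vik k s)
    (hB : B ∈ Vik k s) (hTB : T ≠ B) :
    (MatSet k h s T B).ncard = ((Vik k s).ncard - 2) ^ (h - 2) := by
  have hinj : Function.Injective (fun L : List (List Bool) => T :: (L ++ [B])) :=
    fun _ _ hL => List.append_left_injective [B] (List.cons.inj hL).2
  rw [matSet_eq_image hh hT hB, Set.ncard_image_of_injective _ hinj, ncard_listsOfLengthIn,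
    Set.ncard_sdiff (Set.insert_subset hT (Set.singleton_subset_iff.2 hB)), Set.ncard_pair hTB]

theorem finite_matSet (h : ℕ) (T B : List Bool) : (MatSet k h s T B).Finite :=
  ((finite_vik k s).listsOfLengthIn h).subset (matSet_subset_listsOfLengthIn h T B)

end Counting

theorem matSet_pairwiseDisjoint (k : ℕ) (T B : ℕ → List Bool) (S : Set (ℕ × ℕ)) :
    S.PairwiseDisjoint fun p => MatSet k p.1 p.2 (T p.2) (B p.2) := by
  refine fun p _ q _ hpq => Set.disjoint_left.2 fun M hM hM' => hpq (Prod.ext ?_ ?_)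
  · exact hM.1.symm.trans hM'.1
  · have hT := List.mem_of_mem_head? hM.2.1
    exact (length_of_mem_vik (hM.2.2.2.1 _ hT)).symm.trans (length_of_mem_vik (hM'.2.2.2.1 _ hT))

theorem stmt_11_general (k m n : ℕ)
    (T B : ℕ → List Bool)
    (hTB : ∀ s : ℕ, 2 * k + 3 ≤ s → s ≤ n →
      T s ∈ Vik k s ∧ B s ∈ Vik k s ∧ T s ≠ B s) :
    ({M : List (List Bool) | ∃ h s : ℕ, 2 ≤ h ∧ h ≤ m ∧ 2 * k + 3 ≤ s ∧ s ≤ n ∧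
        M ∈ MatSet k h s (T s) (B s)}).ncard =
      ∑ h ∈ Finset.Icc 2 m, ∑ s ∈ Finset.Icc 3 (n - 2 * k),
        ((Rset k s).ncard - 2) ^ (h - 2) := by
  have hunion : {M : List (List Bool) | ∃ h s : ℕ, 2 ≤ h ∧ h ≤ m ∧ 2 * k + 3 ≤ s ∧ s ≤ n ∧
        M ∈ MatSet k h s (T s) (B s)} =
      ⋃ p ∈ (↑(Finset.Icc 2 m ×ˢ Finset.Icc (2 * k + 3) n) : Set (ℕ × ℕ)),
        MatSet k p.1 p.2 (T p.2) (B p.2) := by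
    ext M
    simp only [Set.mem_ofPred_eq, Set.mem_iUnion, Finset.coe_product, Set.mem_prod, Finset.coe_Icc,
      Set.mem_Icc, Prod.exists, exists_prop]
    grind
  rw [hunion, Set.Finite.ncard_biUnion (Finset.finite_toSet _) (fun p _ => finite_matSet _ _ _)
    (matSet_pairwiseDisjoint k T B _), finsum_mem_coe_finset, Finset.sum_product]
  refine Finset.sum_congr rfl fun h hh => ?_
  rw [← Finset.sum_Icc_add_comp_sub _ three_pos]
  refine Finset.sum_congr rfl fun s hs => ?_
  rw [Finset.mem_Icc] at hh hs
  obtain ⟨hT, hB, hne⟩ := hTB s hs.1 hs.2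
  rw [ncard_matSet hh.1 hT hB hne, ncard_vik (by omega)]

/-- `|𝒱_{m,n}^{(k)}| = Σ_{h=2}^{m} Σ_{s=3}^{n-2k} (r_s^{(k)} - 2)^(h-2)`. -/
theorem stmt_11 (k m n : ℕ) (hk : 3 ≤ k) (hm : 2 ≤ m) (hn : 2 * k + 3 ≤ n)
    (T B : ℕ → List Bool)
    (hTB : ∀ s : ℕ, 2 * k + 3 ≤ s → s ≤ n →
      T s ∈ Vik k s ∧ B s ∈ Vik k s ∧ T s ≠ B s) :
    ({M : List (List Bool) | ∃ h s : ℕ, 2 ≤ h ∧ h ≤ m ∧ 2 * k + 3 ≤ s ∧ s ≤ n ∧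
        M ∈ MatSet k h s (T s) (B s)}).ncard =
      ∑ h ∈ Finset.Icc 2 m, ∑ s ∈ Finset.Icc 3 (n - 2 * k),
        ((Rset k s).ncard - 2) ^ (h - 2) :=
  stmt_11_general k m n T B hTB
end

section
/- For every ℓ with 2k ≤ ℓ ≤ n, the string w = 1^{⌈ℓ/2⌉} 0^{⌊ℓ/2⌋} is bifix-free, w ∉ 𝒱_n^{(k)}, and 𝒱_n^{(k)} ∪ {w} is still a non-overlapping set of strings; hence 𝒱_n^{(k)} is not non-expandable. -/
open List

/-! A word of `𝒱` is `1^k z 0^k` with `z = 0u1` free of `0^k`, so the only prefix of it ending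
in `0^k` is the whole word. Words of `𝒱` and `w = 1^⌈ℓ/2⌉ 0^⌊ℓ/2⌋` all start with `1^k` and
end with `0^k` (as `2k ≤ ℓ`). Hence a nonempty overlap `p` (prefix of a word of `𝒱`, suffix of
a word ending in `0^k`) either has length `< k`, and then consists of `1`s and of `0`s at once,
or ends in `0^k` and is the whole word; overlaps that are suffixes of a word of `𝒱` are the
mirror image. Finally `w` is bifix-free, and lies outside `𝒱` as no `0` precedes a `1` in it. -/

namespace List

variable {α : Type*}

theorem eq_of_ne_nil_of_subset_replicate {p : List α} {x y : α} {m n : ℕ} (hp : p ≠ [])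
    (hx : p ⊆ replicate m x) (hy : p ⊆ replicate n y) : x = y := by
  obtain ⟨z, hz⟩ := exists_mem_of_ne_nil p hp
  exact (eq_of_mem_replicate (hx hz)).symm.trans (eq_of_mem_replicate (hy hz))

theorem IsPrefix.eq_replicate_or_eq_replicate_append {x y : α} {a b : ℕ} {p : List α}
    (h : p <+: replicate a x ++ replicate b y) :
    p = replicate p.length x ∨ p = replicate a x ++ replicate (p.length - a) y := by
  rcases le_total p.length a with hpa | hap
  · exact .inl (prefix_replicate_iff.mp
      (prefix_of_prefix_length_le h (prefix_append _ _) (by simpa))).2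
  · obtain ⟨r, rfl⟩ := prefix_of_prefix_length_le (prefix_append _ _) h (by simpa)
    have hr := (prefix_replicate_iff.mp ((prefix_append_right_inj _).mp h)).2
    exact .inr (by rw [hr]; simp)

theorem IsSuffix.eq_replicate_or_eq_replicate_append {x y : α} {a b : ℕ} {p : List α}
    (h : p <:+ replicate a x ++ replicate b y) :
    p = replicate p.length y ∨ p = replicate (p.length - b) x ++ replicate b y := by
  have h' : p.reverse <+: replicate b y ++ replicate a x := by simpa using reverse_prefix.mpr h
  have := h'.eq_replicate_or_eq_replicate_append
  simpa [reverse_eq_iff] using this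

theorem eq_replicate_append_replicate_of_isPrefix_of_isSuffix [DecidableEq α] {x y : α}
    (hxy : x ≠ y) {a b : ℕ} (ha : 0 < a) (hb : 0 < b) {p : List α} (hp : p ≠ [])
    (hpre : p <+: replicate a x ++ replicate b y) (hsuf : p <:+ replicate a x ++ replicate b y) :
    p = replicate a x ++ replicate b y := by
  have hm : 0 < p.length := length_pos_iff.mpr hp
  rcases hpre.eq_replicate_or_eq_replicate_append with h₁ | h₁ <;>
    rcases hsuf.eq_replicate_or_eq_replicate_append with h₂ | h₂ <;>
    have hx := congrArg (count x) (h₁.symm.trans h₂) <;>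
    have hl := congrArg length h₁ <;>
    simp only [count_append, count_replicate_self, count_replicate, beq_iff_eq, hxy.symm,
      if_false, length_append, length_replicate] at hx hl
  · omega
  · omega
  · omega
  · rwa [show p.length - a = b by omega] at h₁

theorem not_infix_replicate_append {x y : α} (hxy : x ≠ y) {k m : ℕ} (hk : 0 < k) {t : List α}
    (ht : ¬ replicate k x <:+: t) : ¬ replicate k x <:+: replicate m y ++ t := by
  rintro ⟨a, b, h⟩
  rw [append_assoc, append_eq_append_iff] at h
  rcases h with ⟨c, hc, hct⟩ | ⟨c, -, rfl⟩
  · have hcy : c ⊆ replicate m y := (show c <:+ replicate m y from ⟨a, hc.symm⟩).subset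
    have hcxt : c <+: replicate k x ++ b := ⟨t, hct.symm⟩
    rcases eq_or_ne c [] with rfl | hc0
    · exact ht ⟨[], b, by simpa using hct⟩
    rcases le_total c.length k with hck | hkc
    · have hcx := (prefix_of_prefix_length_le hcxt (prefix_append _ _) (by simpa)).subset
      exact hxy (eq_of_ne_nil_of_subset_replicate hc0 hcx hcy)
    · have hxc := prefix_of_prefix_length_le (prefix_append _ _) hcxt (by simpa)
      exact hxy (eq_of_ne_nil_of_subset_replicate (ne_nil_of_length_pos (by simpa using hk))
        (Subset.refl _) fun z hz => hcy (hxc.subset hz))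
  · exact ht ⟨c, b, by rw [append_assoc]⟩

theorem IsPrefix.eq_of_replicate_isSuffix {x y : α} (hxy : x ≠ y) {k : ℕ} {t q : List α}
    (hq : q <+: t ++ replicate k x) (hqx : replicate k x <:+ q) (hy : t.getLast? = some y)
    (ht : ¬ replicate k x <:+: t) : q = t ++ replicate k x := by
  obtain ⟨r, rfl⟩ := hqx
  obtain ⟨s, rfl⟩ := getLast?_eq_some_iff.mp hy
  have hlen : r.length ≤ s.length + 1 := by
    have := hq.length_le
    simp only [length_append, length_replicate, length_cons, length_nil] at this
    omega
  rcases Nat.lt_or_ge s.length (r.length + k) with hlt | hge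
  · rcases hlen.lt_or_eq with hrs | hrs
    · -- the last letter `y` of `t` would lie inside the block `x^k` ending `q`
      have h := hq.getElem (i := s.length) (by simp; omega)
      simp [getElem_append_right (show r.length ≤ s.length by omega), hxy] at h
    · exact hq.eq_of_length (by simp [hrs]; omega)
  · exact absurd ((suffix_append r _).isInfix.trans
      (prefix_of_prefix_length_le hq (prefix_append _ _) (by simp; omega)).isInfix) ht

theorem IsPrefix.eq_of_isSuffix_of_replicate_isSuffix {x y : α} (hxy : x ≠ y) {k : ℕ}
    (hk : 0 < k) {t p v : List α} (hp : p ≠ []) (hpu : p <+: replicate k y ++ t ++ replicate k x)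
    (hpv : p <:+ v) (hv : replicate k x <:+ v) (hy : t.getLast? = some y)
    (ht : ¬ replicate k x <:+: t) : p = replicate k y ++ t ++ replicate k x := by
  rcases le_total p.length k with hpk | hkp
  · have hpy : p <+: replicate k y :=
      prefix_of_prefix_length_le hpu ((prefix_append _ _).trans (prefix_append _ _)) (by simpa)
    have hpx : p <:+ replicate k x := suffix_of_suffix_length_le hpv hv (by simpa)
    exact absurd (eq_of_ne_nil_of_subset_replicate hp hpx.subset hpy.subset) hxy
  · exact hpu.eq_of_replicate_isSuffix hxy (suffix_of_suffix_length_le hv hpv (by simpa))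
      (by simp [getLast?_append, hy]) (not_infix_replicate_append hxy hk ht)

theorem IsSuffix.eq_of_isPrefix_of_replicate_isPrefix {x y : α} (hxy : x ≠ y) {k : ℕ}
    (hk : 0 < k) {t p u : List α} (hp : p ≠ []) (hpv : p <:+ replicate k x ++ t ++ replicate k y)
    (hpu : p <+: u) (hu : replicate k x <+: u) (hy : t.head? = some y)
    (ht : ¬ replicate k x <:+: t) : p = replicate k x ++ t ++ replicate k y := by
  have hpv' : p.reverse <+: replicate k y ++ t.reverse ++ replicate k x := by
    simpa using reverse_prefix.mpr hpv
  have := hpv'.eq_of_isSuffix_of_replicate_isSuffix hxy hk (by simpa using hp)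
    (reverse_suffix.mpr hpu) (by simpa using reverse_suffix.mpr hu) (by simpa using hy)
    (by rwa [← reverse_replicate, reverse_infix])
  simpa [reverse_eq_iff] using this

end List

theorem replicate_append_replicate_not_mem_Vset {k n a b : ℕ} :
    replicate a true ++ replicate b false ∉ Vset k n := by
  rintro ⟨i, -, -, s, hw, -⟩
  have hsorted : Pairwise (fun x y : Bool => y ≤ x) (replicate a true ++ replicate b false) := by
    simp [pairwise_append, pairwise_replicate]
  have h01 : [false, true] <+ replicate a true ++ replicate b false := by
    rw [hw]; simp
  exact absurd (pairwise_pair.mp (hsorted.sublist h01)) (by decide)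

theorem crossBF_of_mem_Vset_of_replicate_isSuffix {k n : ℕ} (hk : 0 < k) {u v : List Bool}
    (hu : u ∈ Vset k n) (hv : replicate k false <:+ v) : CrossBF u v := by
  obtain ⟨i, -, -, s, rfl, -, h₀, -⟩ := hu
  rintro p hp hpu - ⟨hpre, hsuf⟩
  exact hpu (hpre.eq_of_isSuffix_of_replicate_isSuffix Bool.false_ne_true hk hp hsuf hv
    (getLast?_eq_some_iff.mpr ⟨_, rfl⟩) h₀)

theorem crossBF_of_replicate_isPrefix_of_mem_Vset {k n : ℕ} (hk : 0 < k) {u v : List Bool}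
    (hu : replicate k true <+: u) (hv : v ∈ Vset k n) : CrossBF u v := by
  obtain ⟨i, -, -, s, rfl, -, -, h₁⟩ := hv
  rintro p hp - hpv ⟨hpre, hsuf⟩
  exact hpv (hsuf.eq_of_isPrefix_of_replicate_isPrefix Bool.false_ne_true.symm hk hp hpre hu
    (by simp) h₁)

theorem stmt_13_general (k n ℓ : ℕ) (hk : 3 ≤ k) (hℓ₁ : 2 * k ≤ ℓ) :
    CrossBF (List.replicate ((ℓ + 1) / 2) true ++ List.replicate (ℓ / 2) false)
        (List.replicate ((ℓ + 1) / 2) true ++ List.replicate (ℓ / 2) false) ∧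
    (List.replicate ((ℓ + 1) / 2) true ++ List.replicate (ℓ / 2) false) ∉ Vset k n ∧
    (∀ u v : List Bool,
      u ∈ Vset k n ∪
        {List.replicate ((ℓ + 1) / 2) true ++ List.replicate (ℓ / 2) false} →
      v ∈ Vset k n ∪
        {List.replicate ((ℓ + 1) / 2) true ++ List.replicate (ℓ / 2) false} →
      CrossBF u v) := by
  have hk₀ : 0 < k := by omega
  set w := replicate ((ℓ + 1) / 2) true ++ replicate (ℓ / 2) false
  have hw_bifix : CrossBF w w := fun p hp hpw _ ⟨hpre, hsuf⟩ =>
    hpw (eq_replicate_append_replicate_of_isPrefix_of_isSuffix Bool.false_ne_true.symm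
      (by omega) (by omega) hp hpre hsuf)
  have hw_pre : replicate k true <+: w :=
    (prefix_replicate_iff.mpr ⟨by simp; omega, by simp⟩).trans (prefix_append _ _)
  have h_suf : ∀ v ∈ Vset k n ∪ {w}, replicate k false <:+ v := by
    rintro v (⟨i, -, -, s, rfl, -⟩ | rfl)
    · exact suffix_append _ _
    · exact (suffix_replicate_iff.mpr ⟨by simp; omega, by simp⟩).trans (suffix_append _ _)
  refine ⟨hw_bifix, replicate_append_replicate_not_mem_Vset, ?_⟩
  rintro u v (hu | rfl) hv
  · exact crossBF_of_mem_Vset_of_replicate_isSuffix hk₀ hu (h_suf v hv)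
  · rcases hv with hv | rfl
    · exact crossBF_of_replicate_isPrefix_of_mem_Vset hk₀ hw_pre hv
    · exact hw_bifix

/-- For `2k ≤ ℓ ≤ n`, the string `w = 1^⌈ℓ/2⌉ 0^⌊ℓ/2⌋` is bifix-free, is not in
`𝒱_n^{(k)}`, and `𝒱_n^{(k)} ∪ {w}` is still non-overlapping; hence `𝒱_n^{(k)}`
is not non-expandable. -/
theorem stmt_13 (k n ℓ : ℕ) (hk : 3 ≤ k) (hn : 2 * k + 2 ≤ n)
    (hℓ₁ : 2 * k ≤ ℓ) (hℓ₂ : ℓ ≤ n) :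
    CrossBF (List.replicate ((ℓ + 1) / 2) true ++ List.replicate (ℓ / 2) false)
        (List.replicate ((ℓ + 1) / 2) true ++ List.replicate (ℓ / 2) false) ∧
    (List.replicate ((ℓ + 1) / 2) true ++ List.replicate (ℓ / 2) false) ∉ Vset k n ∧
    (∀ u v : List Bool,
      u ∈ Vset k n ∪
        {List.replicate ((ℓ + 1) / 2) true ++ List.replicate (ℓ / 2) false} →
      v ∈ Vset k n ∪
        {List.replicate ((ℓ + 1) / 2) true ++ List.replicate (ℓ / 2) false} →
      CrossBF u v) :=
  stmt_13_general k n ℓ hk hℓ₁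
end

section
/- The set 𝒟_n = ⋃_{0 ≤ i ≤ ⌊(n−2)/2⌋} {1ω0 : ω a Dyck word of length 2i} is a non-overlapping set of strings: for any u, v ∈ 𝒟_n (possibly equal), no proper nonempty prefix of u equals a proper nonempty suffix of v. -/
open List

/-- A Dyck word over `{0,1}` (with `true = 1` an up-step): equal numbers of `1`s
and `0`s, and every prefix has at least as many `1`s as `0`s. -/
def IsDyck (w : List Bool) : Prop :=
  w.count true = w.count false ∧
  ∀ p : List Bool, p <+: w → p.count false ≤ p.count true

/-- The rows `1ω0` with `ω` a Dyck word of length `2s - 2` (so rows of length `2s`). -/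
def DRow (s : ℕ) : Set (List Bool) :=
  {w | ∃ ω : List Bool, IsDyck ω ∧ ω.length = 2 * s - 2 ∧ w = true :: (ω ++ [false])}

/-- The set `𝒟_n` of strings `1ω0` with `ω` a Dyck word of length `2i`,
`0 ≤ i ≤ ⌊(n-2)/2⌋`. -/
def Dset (n : ℕ) : Set (List Bool) :=
  {w | ∃ ω : List Bool, ∃ i : ℕ, IsDyck ω ∧ i ≤ (n - 2) / 2 ∧ ω.length = 2 * i ∧
       w = true :: (ω ++ [false])}

/-- The matrices `M_{h,2s}` with `h` rows of the form `1ω0`, `ω ∈ D_{2s-2}`,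
first row `T`, last row `B`, inner rows different from `T` and `B`. -/
def DMatSet (h s : ℕ) (T B : List Bool) : Set (List (List Bool)) :=
  {M | M.length = h ∧ M.head? = some T ∧ M.getLast? = some B ∧
       (∀ r ∈ M, r ∈ DRow s) ∧
       (∀ i : ℕ, ∀ r : List Bool, 0 < i → i + 1 < h → M[i]? = some r →
          r ≠ T ∧ r ≠ B)}

/-!
Count letters: a proper nonempty prefix of `1ω0` is `1q` with `q` a prefix of the Dyck word `ω`,
so it has strictly more `1`s than `0`s; a proper nonempty suffix of `1ω'0` is `t0` with `t` a
suffix of the Dyck word `ω'`, so it has strictly more `0`s than `1`s. No word is both.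
-/

theorem IsDyck.count_true_le_count_false_of_suffix {ω t : List Bool} (hω : IsDyck ω)
    (ht : t <:+ ω) : t.count true ≤ t.count false := by
  obtain ⟨s, rfl⟩ := ht
  have hs := hω.2 s (prefix_append _ _)
  have hbal := hω.1
  simp only [count_append] at hbal
  omega

theorem IsDyck.count_false_lt_count_true_of_prefix {ω p : List Bool} (hω : IsDyck ω)
    (hp : p <+: true :: (ω ++ [false])) (hne : p ≠ [])
    (hproper : p ≠ true :: (ω ++ [false])) :
    p.count false < p.count true := by
  obtain hnil | ⟨q, rfl, hq'⟩ := prefix_cons_iff.mp hp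
  · exact absurd hnil hne
  obtain hfull | hq := prefix_concat_iff.mp hq'
  · exact absurd (congrArg (true :: ·) hfull) hproper
  have := hω.2 q hq
  rw [count_cons_self, count_cons_of_ne Bool.false_ne_true.symm]
  omega

theorem IsDyck.count_true_lt_count_false_of_suffix {ω p : List Bool} (hω : IsDyck ω)
    (hp : p <:+ true :: (ω ++ [false])) (hne : p ≠ [])
    (hproper : p ≠ true :: (ω ++ [false])) :
    p.count true < p.count false := by
  obtain hfull | hp' := suffix_cons_iff.mp hp
  · exact absurd hfull hproper
  obtain hnil | ⟨t, rfl, ht⟩ := suffix_concat_iff.mp hp'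
  · exact absurd hnil hne
  have := hω.count_true_le_count_false_of_suffix ht
  rw [count_append, count_append, count_singleton_self, count_cons_of_ne Bool.false_ne_true,
    count_nil]
  omega

/-- The set `𝒟_n` is a non-overlapping set of strings. -/
theorem stmt_15 (n : ℕ) (u v : List Bool) (hu : u ∈ Dset n) (hv : v ∈ Dset n) :
    CrossBF u v := by
  obtain ⟨ω, -, hω, -, -, rfl⟩ := hu
  obtain ⟨ω', -, hω', -, -, rfl⟩ := hv
  rintro p hne hpu hpv ⟨hpre, hsuf⟩
  have := hω.count_false_lt_count_true_of_prefix hpre hne hpu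
  have := hω'.count_true_lt_count_false_of_suffix hsuf hne hpv
  omega
end
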